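/- For every integer h ≥ 2, the diameter of MC(2^h) satisfies: diam(MC(2^h)) = diam(MC(2^{h−1})) if h is even, and diam(MC(2^h)) = diam(MC(2^{h−1})) + 1 if h is odd. -/

import Mathlib

/-- The circulant graph `Cay(Z_n, S)`: vertices are `ZMod n`, and distinct
vertices `x, y` are adjacent iff `x - y ≡ s` or `y - x ≡ s (mod n)` for some `s ∈ S`. -/
def circulantGraph (n : ℕ) (S : Set ℕ) : SimpleGraph (ZMod n) where
  Adj x y := x ≠ y ∧ ∃ s ∈ S, (x - y = (s : ZMod n) ∨ y - x = (s : ZMod n))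
  symm := by
    constructor
    rintro x y ⟨hne, s, hs, h⟩
    exact ⟨hne.symm, s, hs, h.symm⟩
  loopless := by
    constructor
    rintro x ⟨hne, -⟩
    exact hne rfl

/-- The multiplicative circulant graph `MC(m^h) = Cay(Z_{m^h}, {m^0, m^1, …, m^{h-1}})`. -/
def MCGraph (m h : ℕ) : SimpleGraph (ZMod (m ^ h)) :=
  circulantGraph (m ^ h) {s | ∃ i < h, s = m ^ i}

namespace MCaux

/-- value of a signed power: `(a, true) ↦ 2^a`, `(a, false) ↦ -2^a`. -/
def pval (p : ℕ × Bool) : ℤ := (if p.2 then 1 else -1) * 2 ^ p.1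

def msum (M : Multiset (ℕ × Bool)) : ℤ := (M.map pval).sum

def Xk (k : ℕ) : ℤ := ∑ i ∈ Finset.range k, 4 ^ i

lemma msum_cons (p : ℕ × Bool) (M : Multiset (ℕ × Bool)) :
    msum (p ::ₘ M) = pval p + msum M := by
  simp [msum]

lemma msum_zero : msum 0 = 0 := rfl

lemma Xk_succ (k : ℕ) : Xk (k + 1) = 1 + 4 * Xk k := by
  simp only [Xk, Finset.sum_range_succ']
  rw [Finset.mul_sum]
  rw [add_comm]
  congr 1
  exact Finset.sum_congr rfl (fun i _ => by ring)

/-- even sum when no exponent-zero term -/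
lemma even_msum {M : Multiset (ℕ × Bool)} (h : ∀ p ∈ M, p.1 ≠ 0) : (2:ℤ) ∣ msum M := by
  apply Multiset.dvd_sum
  intro x hx
  obtain ⟨p, hp, rfl⟩ := Multiset.mem_map.mp hx
  have := h p hp
  obtain ⟨a, ha⟩ := Nat.exists_eq_succ_of_ne_zero this
  rcases p with ⟨a', s⟩
  simp only at ha
  subst ha
  rcases s with _ | _ <;> simp [pval, pow_succ]

lemma odd_of_zero_mem {M : Multiset (ℕ × Bool)} (hd : (M.map Prod.fst).Nodup)
    {s : Bool} (hm : (0, s) ∈ M) : ¬ (2:ℤ) ∣ msum M := by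
  have hM : M = (0, s) ::ₘ M.erase (0, s) := (Multiset.cons_erase hm).symm
  have hz : ∀ p ∈ M.erase (0, s), p.1 ≠ 0 := by
    intro p hp h0
    have : M.map Prod.fst = 0 ::ₘ (M.erase (0,s)).map Prod.fst := by
      conv_lhs => rw [hM]
      simp
    rw [this] at hd
    have := (Multiset.nodup_cons.mp hd).1
    exact this (by simpa [h0] using Multiset.mem_map_of_mem Prod.fst hp)
  have he : (2:ℤ) ∣ msum (M.erase (0,s)) := even_msum hz
  rw [hM, msum_cons]
  rcases s with _ | _ <;> simp [pval] <;> omega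

/-- if the sum is odd there is an exponent-zero term -/
lemma zero_mem_of_odd {M : Multiset (ℕ × Bool)} (h : ¬ (2:ℤ) ∣ msum M) :
    ∃ s, (0, s) ∈ M := by
  by_contra hc
  push_neg at hc
  apply h
  apply even_msum
  intro p hp h0
  have : p = (0, p.2) := by rcases p with ⟨a,s⟩; simp_all
  exact hc p.2 (this ▸ hp)

/-- halving: remove factor 2 when all exponents positive -/
lemma shift_down {M : Multiset (ℕ × Bool)} (h : ∀ p ∈ M, p.1 ≠ 0) :
    ∃ N : Multiset (ℕ × Bool), N.card = M.card ∧ msum M = 2 * msum N ∧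
      ((M.map Prod.fst).Nodup → (N.map Prod.fst).Nodup) := by
  refine ⟨M.map (fun p => (p.1 - 1, p.2)), by simp, ?_, ?_⟩
  · simp only [msum, Multiset.map_map, Function.comp]
    rw [← Multiset.sum_map_mul_left]
    apply congrArg
    apply Multiset.map_congr rfl
    intro p hp
    have h1 : 1 ≤ p.1 := Nat.one_le_iff_ne_zero.mpr (h p hp)
    simp only [pval]
    rcases p with ⟨a, s⟩
    simp only at h1 ⊢
    obtain ⟨b, rfl⟩ := Nat.exists_eq_add_of_le h1
    simp only [Nat.add_sub_cancel_left, pow_add] -- 1 + b - 1 = b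
    ring
  · intro hd
    have : (M.map (fun p => (p.1 - 1, p.2))).map Prod.fst
        = (M.map Prod.fst).map (fun a => a - 1) := by
      simp [Multiset.map_map, Function.comp]
    rw [this]
    refine Multiset.Nodup.map_on ?_ hd
    intro x hx y hy hxy
    obtain ⟨p, hp, rfl⟩ := Multiset.mem_map.mp hx
    obtain ⟨q, hq, rfl⟩ := Multiset.mem_map.mp hy
    have hx1 : p.1 ≠ 0 := h p hp
    have hy1 : q.1 ≠ 0 := h q hq
    omega

/-- Normalization: any signed-power multiset can be replaced by one with distinct
exponents, no larger cardinality, and the same sum. -/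
lemma normalize : ∀ d : ℕ, ∀ M : Multiset (ℕ × Bool), M.card = d →
    ∃ N : Multiset (ℕ × Bool), (N.map Prod.fst).Nodup ∧ N.card ≤ M.card ∧ msum N = msum M := by
  intro d
  induction d using Nat.strong_induction_on with
  | _ d IH =>
  intro M hcard
  by_cases h1 : ∃ p ∈ M, p ∈ M.erase p
  · -- two equal elements: merge into one with exponent +1
    obtain ⟨p, hp, hp2⟩ := h1
    set M2 := (M.erase p).erase p with hM2
    have e1 : M = p ::ₘ p ::ₘ M2 := by
      rw [hM2, Multiset.cons_erase hp2, Multiset.cons_erase hp]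
    have hc2 : ((p.1 + 1, p.2) ::ₘ M2).card = d - 1 := by
      have := congrArg Multiset.card e1
      simp at this ⊢
      omega
    have hd1 : d ≥ 2 := by
      have := congrArg Multiset.card e1
      simp at this
      omega
    obtain ⟨N, hN1, hN2, hN3⟩ := IH (d-1) (by omega) _ hc2
    refine ⟨N, hN1, ?_, ?_⟩
    · rw [hcard]
      rw [hc2] at hN2
      omega
    · rw [hN3, e1, msum_cons, msum_cons, msum_cons]
      rcases p with ⟨a, s⟩
      simp only [pval, pow_succ]
      ring
  · by_cases h2 : ∃ p ∈ M, (p.1, !p.2) ∈ M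
    · -- opposite elements: cancel
      obtain ⟨p, hp, hq⟩ := h2
      have hne : (p.1, !p.2) ≠ p := by
        rcases p with ⟨a, s⟩; simp
      have hq2 : (p.1, !p.2) ∈ M.erase p := (Multiset.mem_erase_of_ne hne).mpr hq
      set M2 := (M.erase p).erase (p.1, !p.2) with hM2
      have e1 : M = p ::ₘ (p.1, !p.2) ::ₘ M2 := by
        rw [hM2, Multiset.cons_erase hq2, Multiset.cons_erase hp]
      have hc2 : M2.card = d - 2 := by
        have := congrArg Multiset.card e1
        simp at this
        omega
      have hd1 : d ≥ 2 := by
        have := congrArg Multiset.card e1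
        simp at this
        omega
      obtain ⟨N, hN1, hN2, hN3⟩ := IH (d-2) (by omega) _ hc2
      refine ⟨N, hN1, by omega, ?_⟩
      rw [hN3, e1, msum_cons, msum_cons]
      rcases p with ⟨a, s⟩
      rcases s with _ | _ <;> simp [pval]
    · -- all distinct exponents already
      push_neg at h1 h2
      refine ⟨M, ?_, le_refl _, rfl⟩
      have hnd : M.Nodup := by
        rw [Multiset.nodup_iff_count_le_one]
        intro p
        by_contra hc
        push_neg at hc
        have hp : p ∈ M := by
          rw [← Multiset.count_pos]; omega
        exact h1 p hp (by rw [← Multiset.count_pos, Multiset.count_erase_self]; omega)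
      refine Multiset.Nodup.map_on ?_ hnd
      intro x hx y hy hxy
      rcases x with ⟨a, s⟩
      rcases y with ⟨b, t⟩
      simp only at hxy
      subst hxy
      by_cases hst : s = t
      · rw [hst]
      · exfalso
        have : t = !s := by rcases s <;> rcases t <;> simp_all
        subst this
        exact h2 (a, s) hx hy

lemma div_pow_step {m : ℕ} {a b : ℤ} (h : (2:ℤ)^(m+1) ∣ 2*a - 2*b) : (2:ℤ)^m ∣ a - b := by
  have h2 : 2*a - 2*b = 2*(a - b) := by ring
  rw [h2, pow_succ, mul_comm ((2:ℤ)^m) 2] at h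
  exact (mul_dvd_mul_iff_left (by norm_num : (2:ℤ) ≠ 0)).mp h

/-- Key step: peel an exponent-zero term (must exist when target is odd)
and halve. -/
lemma peel {M : Multiset (ℕ × Bool)} (hd : (M.map Prod.fst).Nodup)
    {m : ℕ} {t : ℤ} (ht : ¬ (2:ℤ) ∣ t) (hdvd : (2:ℤ)^(m+1) ∣ msum M - t) :
    ∃ (s : Bool) (N : Multiset (ℕ × Bool)), (N.map Prod.fst).Nodup ∧
      N.card + 1 = M.card ∧
      (2:ℤ)^m ∣ msum N - (t - pval (0, s)) / 2 ∧ 2 ∣ t - pval (0, s) := by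
  -- msum M is odd
  have hodd : ¬ (2:ℤ) ∣ msum M := by
    intro h2
    apply ht
    have : (2:ℤ) ∣ msum M - t := dvd_trans (dvd_pow_self 2 (Nat.succ_ne_zero m)) hdvd
    omega
  obtain ⟨s, hs⟩ := zero_mem_of_odd hodd
  have hM : M = (0, s) ::ₘ M.erase (0, s) := (Multiset.cons_erase hs).symm
  have hz : ∀ p ∈ M.erase (0, s), p.1 ≠ 0 := by
    intro p hp h0
    have hmap : M.map Prod.fst = 0 ::ₘ (M.erase (0,s)).map Prod.fst := by
      conv_lhs => rw [hM]; simp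
    rw [hmap] at hd
    exact (Multiset.nodup_cons.mp hd).1 (by simpa [h0] using Multiset.mem_map_of_mem Prod.fst hp)
  have hd' : ((M.erase (0,s)).map Prod.fst).Nodup := by
    have hmap : M.map Prod.fst = 0 ::ₘ (M.erase (0,s)).map Prod.fst := by
      conv_lhs => rw [hM]; simp
    rw [hmap] at hd
    exact (Multiset.nodup_cons.mp hd).2
  obtain ⟨N, hN1, hN2, hN3⟩ := shift_down hz
  refine ⟨s, N, hN3 hd', ?_, ?_, ?_⟩
  · have := congrArg Multiset.card hM
    simp at this
    omega
  · have e1 : msum M = pval (0, s) + 2 * msum N := by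
      rw [hM, msum_cons, hN2]
    rw [e1] at hdvd
    have h2 : (2:ℤ) ∣ t - pval (0, s) := by
      have hpv : pval (0, s) = 1 ∨ pval (0, s) = -1 := by
        rcases s <;> simp [pval]
      omega
    obtain ⟨u, hu⟩ := h2
    apply div_pow_step
    have he : 2 * msum N - 2 * ((t - pval (0,s))/2) = pval (0,s) + 2*msum N - t := by
      rw [hu, Int.mul_ediv_cancel_left u (by norm_num)]
      omega
    rw [he]
    exact hdvd
  · have hpv : pval (0, s) = 1 ∨ pval (0, s) = -1 := by
      rcases s <;> simp [pval]
    omega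

/-- Halve when target even (no exponent-zero term possible). -/
lemma halve {M : Multiset (ℕ × Bool)} (hd : (M.map Prod.fst).Nodup)
    {m : ℕ} {t : ℤ} (ht : (2:ℤ) ∣ t) (hdvd : (2:ℤ)^(m+1) ∣ msum M - t) :
    ∃ N : Multiset (ℕ × Bool), (N.map Prod.fst).Nodup ∧ N.card = M.card ∧
      (2:ℤ)^m ∣ msum N - t / 2 := by
  have heven : (2:ℤ) ∣ msum M := by
    have : (2:ℤ) ∣ msum M - t := dvd_trans (dvd_pow_self 2 (Nat.succ_ne_zero m)) hdvd
    omega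
  have hz : ∀ p ∈ M, p.1 ≠ 0 := by
    intro p hp h0
    have : p = (0, p.2) := by rcases p with ⟨a,s⟩; simp_all
    exact odd_of_zero_mem hd (this ▸ hp) heven
  obtain ⟨N, hN1, hN2, hN3⟩ := shift_down hz
  refine ⟨N, hN3 hd, hN1, ?_⟩
  obtain ⟨u, hu⟩ := ht
  apply div_pow_step
  have : 2 * msum N - 2 * (t/2) = msum M - t := by
    rw [hu, Int.mul_ediv_cancel_left u (by norm_num), ← hN2]
  rw [this]
  exact hdvd

lemma pval_true : pval (0, true) = 1 := by simp [pval]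
lemma pval_false : pval (0, false) = -1 := by simp [pval]

/-- Main lower-bound lemma. -/
lemma main_lb : ∀ k : ℕ, 1 ≤ k → ∀ M : Multiset (ℕ × Bool), (M.map Prod.fst).Nodup →
    ((2:ℤ)^(2*k-1) ∣ msum M - Xk k → k ≤ M.card) ∧
    ((2:ℤ)^(2*k-1) ∣ msum M - (Xk k + 1) → k - 1 ≤ M.card) := by
  intro k hk
  induction k, hk using Nat.le_induction with
  | base =>
    intro M hd
    constructor
    · intro hdvd
      by_contra hc
      push_neg at hc
      interval_cases h : M.card
      · have : M = 0 := Multiset.card_eq_zero.mp h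
        subst this
        simp [msum, Xk] at hdvd
    · intro _; omega
  | succ k hk IH =>
    intro M hd
    have hX : Xk (k+1) = 1 + 4 * Xk k := Xk_succ k
    have hm : 2*(k+1)-1 = (2*k-1) + 1 + 1 := by omega
    rw [hm]
    constructor
    · intro hdvd
      -- target odd
      have ht : ¬ (2:ℤ) ∣ Xk (k+1) := by rw [hX]; omega
      obtain ⟨s, N, hdN, hcN, hdvdN, h2N⟩ := peel hd ht hdvd
      rcases s with _ | _
      · -- sign -1 : target (Xk (k+1) + 1)/2 = 1 + 2 * Xk k, odd again
        rw [pval_false] at hdvdN h2N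
        have he : (Xk (k+1) - (-1)) / 2 = 1 + 2 * Xk k := by
          rw [hX]; omega
        rw [he] at hdvdN
        have ht2 : ¬ (2:ℤ) ∣ (1 + 2 * Xk k) := by omega
        obtain ⟨s', N', hdN', hcN', hdvdN', h2N'⟩ := peel hdN ht2 hdvdN
        rcases s' with _ | _
        · rw [pval_false] at hdvdN'
          have he2 : (1 + 2 * Xk k - (-1)) / 2 = Xk k + 1 := by omega
          rw [he2] at hdvdN'
          have := (IH N' hdN').2 hdvdN'
          omega
        · rw [pval_true] at hdvdN'
          have he2 : (1 + 2 * Xk k - 1) / 2 = Xk k := by omega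
          rw [he2] at hdvdN'
          have := (IH N' hdN').1 hdvdN'
          omega
      · -- sign +1 : target (Xk (k+1) - 1)/2 = 2 * Xk k, even
        rw [pval_true] at hdvdN
        have he : (Xk (k+1) - 1) / 2 = 2 * Xk k := by rw [hX]; omega
        rw [he] at hdvdN
        obtain ⟨N', hdN', hcN', hdvdN'⟩ := halve hdN ⟨Xk k, rfl⟩ hdvdN
        rw [Int.mul_ediv_cancel_left _ (by norm_num : (2:ℤ) ≠ 0)] at hdvdN'
        have := (IH N' hdN').1 hdvdN'
        omega
    · intro hdvd
      -- target Xk (k+1) + 1 = 2 + 4 * Xk k, even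
      have ht : (2:ℤ) ∣ (Xk (k+1) + 1) := by rw [hX]; omega
      obtain ⟨N, hdN, hcN, hdvdN⟩ := halve hd ht hdvd
      have he : (Xk (k+1) + 1) / 2 = 1 + 2 * Xk k := by rw [hX]; omega
      rw [he] at hdvdN
      have ht2 : ¬ (2:ℤ) ∣ (1 + 2 * Xk k) := by omega
      obtain ⟨s', N', hdN', hcN', hdvdN', h2N'⟩ := peel hdN ht2 hdvdN
      rcases s' with _ | _
      · rw [pval_false] at hdvdN'
        have he2 : (1 + 2 * Xk k - (-1)) / 2 = Xk k + 1 := by omega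
        rw [he2] at hdvdN'
        have := (IH N' hdN').2 hdvdN'
        omega
      · rw [pval_true] at hdvdN'
        have he2 : (1 + 2 * Xk k - 1) / 2 = Xk k := by omega
        rw [he2] at hdvdN'
        have := (IH N' hdN').1 hdvdN'
        omega

lemma msum_add (A B : Multiset (ℕ × Bool)) : msum (A + B) = msum A + msum B := by
  simp [msum]

lemma msum_shift2 (M : Multiset (ℕ × Bool)) :
    msum (M.map (fun p => (p.1 + 2, p.2))) = 4 * msum M := by
  simp only [msum, Multiset.map_map, Function.comp]
  rw [← Multiset.sum_map_mul_left]
  apply congrArg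
  apply Multiset.map_congr rfl
  intro p _
  simp only [pval, pow_add]
  ring

/-- Upper bound: every integer is congruent mod 2^h to a sum of at most
`(h+1)/2` signed powers of two with exponents < h. -/
lemma upper : ∀ h : ℕ, ∀ x : ℤ, ∃ M : Multiset (ℕ × Bool),
    M.card ≤ (h+1)/2 ∧ (∀ p ∈ M, p.1 < h) ∧ (2:ℤ)^h ∣ msum M - x := by
  intro h
  induction h using Nat.strong_induction_on with
  | _ h IH =>
  match h with
  | 0 => intro x; exact ⟨0, by simp, by simp, by simp⟩
  | 1 =>
    intro x
    rcases Int.even_or_odd x with ⟨u, hu⟩ | ⟨u, hu⟩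
    · exact ⟨0, by simp, by simp, ⟨-u, by simp [msum]; omega⟩⟩
    · exact ⟨{(0, true)}, by simp, by simp, ⟨-u, by simp [msum, pval]; omega⟩⟩
  | (n+2) =>
    intro x
    -- choose r ∈ {0, 1, 2, -1} with x ≡ r [4]
    have h40 : (0:ℤ) ≤ x % 4 := Int.emod_nonneg x (by norm_num)
    have h44 : x % 4 < 4 := Int.emod_lt_of_pos x (by norm_num)
    have hdvd4 : (4:ℤ) ∣ x - x % 4 := Int.dvd_self_sub_of_emod_eq rfl
    -- helper to build from the IH
    have build : ∀ (E : Multiset (ℕ × Bool)) (r : ℤ), E.card ≤ 1 → (∀ p ∈ E, p.1 < 2) →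
        msum E = r → (4:ℤ) ∣ x - r → ∃ M : Multiset (ℕ × Bool),
        M.card ≤ (n+2+1)/2 ∧ (∀ p ∈ M, p.1 < n+2) ∧ (2:ℤ)^(n+2) ∣ msum M - x := by
      intro E r hE1 hE2 hE3 hr
      obtain ⟨y, hy⟩ := hr
      obtain ⟨M', hM1, hM2, hM3⟩ := IH n (by omega) y
      refine ⟨M'.map (fun p => (p.1 + 2, p.2)) + E, ?_, ?_, ?_⟩
      · simp only [Multiset.card_add, Multiset.card_map]
        omega
      · intro p hp
        rcases Multiset.mem_add.mp hp with hp | hp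
        · obtain ⟨q, hq, rfl⟩ := Multiset.mem_map.mp hp
          have := hM2 q hq
          simp
          omega
        · have := hE2 p hp
          omega
      · have e1 : msum (M'.map (fun p => (p.1 + 2, p.2)) + E) = 4 * msum M' + r := by
          rw [msum_add, msum_shift2, hE3]
        rw [e1]
        obtain ⟨z, hz⟩ := hM3
        refine ⟨z, ?_⟩
        have hx : x = r + 4 * y := by omega
        have : 4 * msum M' + r - x = 4 * (msum M' - y) := by rw [hx]; ring
        rw [this, hz]
        have : ((2:ℤ)^(n+2)) = 4 * 2^n := by rw [pow_add]; ring
        rw [this]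
        ring
    interval_cases hr4 : (x % 4)
    · exact build 0 0 (by simp) (by simp) (by simp [msum]) (by simpa using hdvd4)
    · exact build {(0, true)} 1 (by simp) (by simp) (by simp [msum, pval]) (by simpa [hr4] using hdvd4)
    · exact build {(1, true)} 2 (by simp) (by simp) (by simp [msum, pval]) (by simpa [hr4] using hdvd4)
    · refine build {(0, false)} (-1) (by simp) (by simp) (by simp [msum, pval]) ?_
      have : x - (-1) = (x - 3) + 4 := by ring
      rw [this]
      exact dvd_add (by simpa [hr4] using hdvd4) ⟨1, by norm_num⟩

section Graph

variable {h : ℕ}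

instance : NeZero (2 ^ h) := ⟨pow_ne_zero h two_ne_zero⟩

lemma cast_pval_true (a : ℕ) :
    ((pval (a, true) : ℤ) : ZMod (2^h)) = ((2^a : ℕ) : ZMod (2^h)) := by
  simp [pval]

lemma cast_pval_false (a : ℕ) :
    ((pval (a, false) : ℤ) : ZMod (2^h)) = -((2^a : ℕ) : ZMod (2^h)) := by
  simp [pval]

lemma pow_ne_zero_zmod (ha : a < h) : ((2^a : ℕ) : ZMod (2^h)) ≠ 0 := by
  rw [Ne, ZMod.natCast_eq_zero_iff]
  rw [Nat.pow_dvd_pow_iff_le_right (by norm_num)]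
  omega

lemma adj_step {a : ℕ} (ha : a < h) (s : Bool) (u : ZMod (2^h)) :
    (MCGraph 2 h).Adj u (u + ((pval (a, s) : ℤ) : ZMod (2^h))) := by
  have hnz := pow_ne_zero_zmod ha
  constructor
  · rcases s with _ | _
    · rw [cast_pval_false]
      intro hc
      apply hnz
      have := (left_eq_add.mp hc)
      rw [neg_eq_zero] at this
      exact this
    · rw [cast_pval_true]
      intro hc
      exact hnz (left_eq_add.mp hc)
  · refine ⟨2^a, ⟨a, ha, rfl⟩, ?_⟩
    rcases s with _ | _
    · rw [cast_pval_false]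
      left
      ring
    · rw [cast_pval_true]
      right
      ring

lemma walk_of_list : ∀ l : List (ℕ × Bool), (∀ p ∈ l, p.1 < h) →
    ∀ u : ZMod (2^h), ∃ w : (MCGraph 2 h).Walk u (u + (((l.map pval).sum : ℤ) : ZMod (2^h))),
      w.length = l.length := by
  intro l
  induction l with
  | nil =>
    intro _ u
    exact ⟨SimpleGraph.Walk.nil.copy rfl (by simp), by simp⟩
  | cons p l IH =>
    intro hl u
    have hp : p.1 < h := hl p List.mem_cons_self
    obtain ⟨w, hw⟩ := IH (fun q hq => hl q (List.mem_cons_of_mem p hq)) (u + ((pval p : ℤ) : ZMod (2^h)))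
    have hadj : (MCGraph 2 h).Adj u (u + ((pval p : ℤ) : ZMod (2^h))) := by
      rcases p with ⟨a, s⟩
      exact adj_step hp s u
    have hend : (u + ((pval p : ℤ) : ZMod (2^h))) + ((((l.map pval).sum : ℤ)) : ZMod (2^h))
        = u + ((((p :: l).map pval).sum : ℤ) : ZMod (2^h)) := by
      simp only [List.map_cons, List.sum_cons]
      push_cast
      ring
    exact ⟨SimpleGraph.Walk.cons hadj (w.copy rfl hend), by simp [hw]⟩

lemma list_of_walk {u v : ZMod (2^h)} (w : (MCGraph 2 h).Walk u v) :
    ∃ M : Multiset (ℕ × Bool), M.card = w.length ∧ ((msum M : ℤ) : ZMod (2^h)) = v - u := by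
  induction w with
  | nil => exact ⟨0, by simp, by simp [msum]⟩
  | cons hadj w IH =>
    rename_i a b c
    obtain ⟨M, hM1, hM2⟩ := IH
    obtain ⟨hne, s, ⟨i, hi, rfl⟩, hcase⟩ := hadj
    rcases hcase with hc | hc
    · -- a - b = 2^i, so b - a = -(2^i) : take (i, false)
      refine ⟨(i, false) ::ₘ M, by simp [hM1]; rfl, ?_⟩
      rw [msum_cons]
      push_cast
      rw [cast_pval_false]
      have hba : b - a = -(((2^i : ℕ)) : ZMod (2^h)) := by rw [← hc]; ring
      rw [hM2, ← hba]
      ring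
    · refine ⟨(i, true) ::ₘ M, by simp [hM1]; rfl, ?_⟩
      rw [msum_cons]
      push_cast
      rw [cast_pval_true]
      have hba : b - a = (((2^i : ℕ)) : ZMod (2^h)) := by rw [← hc]
      rw [hM2, ← hba]
      ring

end Graph

lemma ediam_eq (h : ℕ) (hh : 1 ≤ h) :
    (MCGraph 2 h).ediam = (((h+1)/2 : ℕ) : ℕ∞) := by
  set k := (h+1)/2 with hk
  apply le_antisymm
  · apply SimpleGraph.ediam_le_of_edist_le
    intro u v
    obtain ⟨M, hc, hexp, hdvd⟩ := upper h (((v - u).val : ℕ) : ℤ)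
    have hsum : (((M.toList.map pval).sum : ℤ) : ZMod (2^h)) = v - u := by
      have h1 : (M.toList.map pval).sum = msum M := by
        rw [msum]
        conv_rhs => rw [← Multiset.coe_toList M]
        rw [Multiset.map_coe, Multiset.sum_coe]
      rw [h1]
      have h0 : (((msum M - ((v-u).val : ℤ)) : ℤ) : ZMod (2^h)) = 0 := by
        rw [ZMod.intCast_zmod_eq_zero_iff_dvd]
        exact_mod_cast hdvd
      push_cast at h0
      have h2 := sub_eq_zero.mp h0
      rw [h2]
      simp [ZMod.natCast_val, ZMod.cast_id]
    obtain ⟨w, hw⟩ := walk_of_list M.toList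
      (fun p hp => hexp p (by rwa [← Multiset.mem_toList])) u
    have hv : u + (((M.toList.map pval).sum : ℤ) : ZMod (2^h)) = v := by
      rw [hsum]; ring
    have hwalk := SimpleGraph.edist_le (w.copy rfl hv)
    apply le_trans hwalk
    rw [SimpleGraph.Walk.length_copy, hw]
    have : M.toList.length = M.card := Multiset.length_toList M
    rw [this]
    exact_mod_cast Nat.cast_le.mpr hc
  · have hk1 : 1 ≤ k := by omega
    refine le_trans ?_ (SimpleGraph.edist_le_ediam
      (u := (0 : ZMod (2^h))) (v := ((Xk k : ℤ) : ZMod (2^h))))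
    rw [SimpleGraph.edist_eq_sInf]
    apply le_sInf
    rintro b ⟨w, rfl⟩
    obtain ⟨M, hM1, hM2⟩ := list_of_walk w
    have hdvd : (2:ℤ)^h ∣ msum M - Xk k := by
      have h0 : (((msum M - Xk k) : ℤ) : ZMod (2^h)) = 0 := by
        push_cast
        rw [hM2]
        ring
      have := (ZMod.intCast_zmod_eq_zero_iff_dvd _ _).mp h0
      exact_mod_cast this
    have hdvd2 : (2:ℤ)^(2*k-1) ∣ msum M - Xk k :=
      dvd_trans (pow_dvd_pow 2 (by omega)) hdvd
    obtain ⟨N, hN1, hN2, hN3⟩ := normalize M.card M rfl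
    have := (main_lb k hk1 N hN1).1 (by rwa [hN3])
    have hfin : k ≤ w.length := by omega
    exact_mod_cast Nat.cast_le.mpr hfin

lemma diam_eq (h : ℕ) (hh : 1 ≤ h) : (MCGraph 2 h).diam = (h+1)/2 := by
  rw [SimpleGraph.diam, ediam_eq h hh]
  simp


end MCaux

/-- Recursion for the diameter of `MC(2^h)`: it equals `diam(MC(2^(h-1)))` when `h`
is even, and `diam(MC(2^(h-1))) + 1` when `h` is odd. -/
theorem MC_two_diam_recursion (h : ℕ) (hh : 2 ≤ h) :
    (Even h → (MCGraph 2 h).diam = (MCGraph 2 (h - 1)).diam) ∧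
    (Odd h → (MCGraph 2 h).diam = (MCGraph 2 (h - 1)).diam + 1) := by
  rw [MCaux.diam_eq h (by omega), MCaux.diam_eq (h-1) (by omega)]
  constructor
  · intro he
    rw [Nat.even_iff] at he
    omega
  · intro ho
    rw [Nat.odd_iff] at ho
    omega
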